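/- Let α ≥ 0 and m > 0 be real numbers and define f(r) = (1/(2r))·(1 − α·(2/(1 + (2r/m)^α) − 1)) for r > 0. Then f(m/2) = 1/m and f'(r) + f(r)² = (α² − 1)/(4r²) for all r > 0. Moreover, for any R0 > 0, setting a0 = m/(2R0) and g(r) = a0·f(a0·r), the function g satisfies g(R0) = 1/(2R0) and g'(r) + g(r)² = (α² − 1)/(4r²) for all r > 0. -/

import Mathlib

/-!
`fRic α m` is the logarithmic derivative of `v(r) = r^((1-α)/2) (1 + (2r/m)^α)`, a combination of
the two power solutions `r^((1±α)/2)` of `v'' = (α² - 1)/(4r²) v`, so it solves the Riccati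
equation. The equation `y' + y² = k/r²` is invariant under the rescaling `y(r) ↦ c y(c r)`.
-/

/-- The explicit Riccati comparison function
f(r) = (1/(2r))·(1 − α·(2/(1 + (2r/m)^α) − 1)). -/
noncomputable def fRic (α m r : ℝ) : ℝ :=
  (1 / (2 * r)) * (1 - α * (2 / (1 + (2 * r / m) ^ α) - 1))

open Real

lemma hasDerivAt_const_mul_rpow (α : ℝ) {c r : ℝ} (hcr : 0 < c * r) :
    HasDerivAt (fun s => (c * s) ^ α) (α * (c * r) ^ α / r) r := by
  have hc : c ≠ 0 := by rintro rfl; simp at hcr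
  have hr : r ≠ 0 := by rintro rfl; simp at hcr
  refine (((hasDerivAt_id' r).const_mul c).rpow_const (p := α) (Or.inl hcr.ne')).congr_deriv ?_
  rw [rpow_sub_one hcr.ne']
  field_simp

theorem HasDerivAt.riccati_comp_const_mul {f : ℝ → ℝ} {k c r : ℝ} (hc : c ≠ 0)
    (hf : HasDerivAt f (k / (c * r) ^ 2 - f (c * r) ^ 2) (c * r)) :
    HasDerivAt (fun s => c * f (c * s)) (k / r ^ 2 - (c * f (c * r)) ^ 2) r := by
  refine ((hf.comp r ((hasDerivAt_id' r).const_mul c)).const_mul c).congr_deriv ?_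
  rcases eq_or_ne r 0 with rfl | hr
  · simp
    ring
  · field_simp

lemma fRic_half (α : ℝ) {m : ℝ} (hm : m ≠ 0) : fRic α m (m / 2) = 1 / m := by
  have : 2 * (m / 2) / m = 1 := by field_simp
  simp only [fRic, this, one_rpow]
  field_simp
  ring

lemma hasDerivAt_fRic (α : ℝ) {m r : ℝ} (hm : 0 < m) (hr : 0 < r) :
    HasDerivAt (fRic α m) ((α ^ 2 - 1) / (4 * r ^ 2) - fRic α m r ^ 2) r := by
  set u := (2 * r / m) ^ α with hu
  have hu1 : 0 < 1 + u := by positivity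
  have hpow : HasDerivAt (fun s => (2 * s / m) ^ α) (α * u / r) r := by
    simpa only [div_mul_eq_mul_div] using
      hasDerivAt_const_mul_rpow α (c := 2 / m) (r := r) (by positivity)
  have hfrac : HasDerivAt (fun s => 2 / (1 + (2 * s / m) ^ α))
      ((0 * (1 + u) - 2 * (α * u / r)) / (1 + u) ^ 2) r :=
    (hasDerivAt_const r (2 : ℝ)).div (hpow.const_add 1) hu1.ne'
  have hrecip : HasDerivAt (fun s : ℝ => 1 / (2 * s))
      ((0 * (2 * r) - 1 * (2 * 1)) / (2 * r) ^ 2) r :=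
    (hasDerivAt_const r (1 : ℝ)).div ((hasDerivAt_id' r).const_mul 2) (by positivity)
  refine (hrecip.mul (((hfrac.sub_const 1).const_mul α).const_sub 1)).congr_deriv ?_
  simp only [fRic, ← hu]
  field_simp
  ring

theorem statement18_general (α m : ℝ) (hm : 0 < m) :
    fRic α m (m / 2) = 1 / m ∧
    (∀ r : ℝ, 0 < r →
      HasDerivAt (fRic α m)
        ((α ^ 2 - 1) / (4 * r ^ 2) - (fRic α m r) ^ 2) r) ∧
    (∀ R0 : ℝ, 0 < R0 →
      (m / (2 * R0)) * fRic α m ((m / (2 * R0)) * R0) = 1 / (2 * R0) ∧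
      ∀ r : ℝ, 0 < r →
        HasDerivAt (fun s => (m / (2 * R0)) * fRic α m ((m / (2 * R0)) * s))
          ((α ^ 2 - 1) / (4 * r ^ 2)
            - ((m / (2 * R0)) * fRic α m ((m / (2 * R0)) * r)) ^ 2) r) := by
  refine ⟨fRic_half α hm.ne', fun r hr => hasDerivAt_fRic α hm hr, fun R0 hR0 => ⟨?_, ?_⟩⟩
  · have hscale : m / (2 * R0) * R0 = m / 2 := by field_simp
    rw [hscale, fRic_half α hm.ne']
    field_simp
  · intro r hr
    set c := m / (2 * R0)
    have hf := hasDerivAt_fRic α hm (r := c * r) (by positivity)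
    rw [div_mul_eq_div_div] at hf ⊢
    exact hf.riccati_comp_const_mul (by positivity)

/-- f satisfies f(m/2) = 1/m and the Riccati equation
f' + f² = (α² − 1)/(4r²) for r > 0; moreover for any R0 > 0, with
a0 = m/(2R0), the rescaled function g(r) = a0·f(a0·r) satisfies
g(R0) = 1/(2R0) and g' + g² = (α² − 1)/(4r²) for r > 0. -/
theorem statement18 (α m : ℝ) (hα : 0 ≤ α) (hm : 0 < m) :
    fRic α m (m / 2) = 1 / m ∧
    (∀ r : ℝ, 0 < r →
      HasDerivAt (fRic α m)
        ((α ^ 2 - 1) / (4 * r ^ 2) - (fRic α m r) ^ 2) r) ∧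
    (∀ R0 : ℝ, 0 < R0 →
      (m / (2 * R0)) * fRic α m ((m / (2 * R0)) * R0) = 1 / (2 * R0) ∧
      ∀ r : ℝ, 0 < r →
        HasDerivAt (fun s => (m / (2 * R0)) * fRic α m ((m / (2 * R0)) * s))
          ((α ^ 2 - 1) / (4 * r ^ 2)
            - ((m / (2 * R0)) * fRic α m ((m / (2 * R0)) * r)) ^ 2) r) :=
  statement18_general α m hm
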